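/- Let G be a connected graph with spanning tree T. Suppose T has a set L of leaves with |L| ≥ 2⌈k/4⌉ℓ such that every vertex of L has degree at least 2 in G. Then G has ℓ spanning trees T_1, ..., T_ℓ such that |E(T_i) △ E(T_j)| ≥ k for all i ≠ j. -/

import Mathlib

/-!
Split `2⌈k/4⌉ℓ` of the leaves into `ℓ` disjoint groups `S_i` of size `s = 2⌈k/4⌉`. In `T_i`
every leaf `v ∈ S_i` is detached from its tree neighbour `p v` and reattached along a second edge
`v (c v)` of `G`. Where `c` cycles inside `S_i`, a minimal set `B` of leaves keeps its old edge;
then every vertex still reaches `V \ S_i`, and `T_i` is a spanning tree since it has as many edges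
as `T`. Away from `S_i` the tree `T_i` agrees with `T`, so every leaf of `S_i` puts its own edge
into `T_i Δ T_j`: a leaf `v ∉ B` its deleted edge `v (p v)`, a leaf `b ∈ B` the new edge `u b`
with `c u = b`, which lies inside `S_i`. Hence `|T_i Δ T_j| ≥ 2s ≥ k`.
-/

open Function

theorem Set.Finite.exists_feedback_subset_image_sdiff {α : Type*} {S : Set α} (hS : S.Finite)
    (c : α → α) (hc : ∀ v ∈ S, c v ≠ v) :
    ∃ B ⊆ S, (∃ r : α → ℕ, ∀ v ∈ S \ B, c v ∈ S → r (c v) < r v) ∧ B ⊆ c '' (S \ B) := by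
  classical
  let IsFeedback (B : Set α) := B ⊆ S ∧ ∃ r : α → ℕ, ∀ v ∈ S \ B, c v ∈ S → r (c v) < r v
  have hfin : {B | IsFeedback B}.Finite := hS.finite_subsets.subset fun _ hB ↦ hB.1
  obtain ⟨B, ⟨hBS, r, hr⟩, hmin⟩ := hfin.exists_minimal ⟨S, subset_rfl, 0, by simp⟩
  refine ⟨B, hBS, ⟨r, hr⟩, fun b hb ↦ by_contra fun hnot ↦ ?_⟩
  -- outside `B`, nothing maps to `b`, so `b` can be ranked just above `c b`
  have hfeedback : IsFeedback (B \ {b}) := by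
    refine ⟨sdiff_subset.trans hBS, update r b (r (c b) + 1), fun v hv hcv ↦ ?_⟩
    obtain rfl | hvb := eq_or_ne v b
    · simp [hc v hv.1]
    · have hvB : v ∉ B := fun h ↦ hv.2 ⟨h, hvb⟩
      have hcvb : c v ≠ b := fun h ↦ hnot ⟨v, ⟨hv.1, hvB⟩, h⟩
      simpa [hvb, hcvb] using hr v ⟨hv.1, hvB⟩ hcv
  exact (hmin hfeedback sdiff_subset hb).2 rfl

theorem Finset.exists_pairwise_disjoint_card_eq {α : Type*} (L : Finset α) {m n : ℕ}
    (h : n * m ≤ L.card) :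
    ∃ S : Fin m → Finset α, (∀ i, S i ⊆ L ∧ (S i).card = n) ∧ Pairwise (Disjoint on S) := by
  let f : Fin m × Fin n ↪ L :=
    (finProdFinEquiv.toEmbedding.trans (Fin.castLEEmb (by lia))).trans L.equivFin.symm.toEmbedding
  let g (i : Fin m) : Fin n ↪ α :=
    ⟨fun t ↦ f (i, t), fun t t' h ↦ by simpa using f.injective (Subtype.ext h)⟩
  refine ⟨fun i ↦ univ.map (g i), fun i ↦ ⟨?_, by simp⟩, fun i j hij ↦ ?_⟩
  · simp only [subset_iff, mem_map, mem_univ, true_and, forall_exists_index,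
      forall_apply_eq_imp_iff]
    exact fun t ↦ (f (i, t)).2
  · simp only [onFun, disjoint_left, mem_map, mem_univ, true_and, not_exists, forall_exists_index,
      forall_apply_eq_imp_iff]
    intro t t' h
    exact hij (congrArg Prod.fst (f.injective (Subtype.ext h))).symm

namespace SimpleGraph

variable {V : Type*}

section Reattach

variable {G T : SimpleGraph V} {S : Set V} {π p : V → V} {r : V → ℕ}

def reattach (T : SimpleGraph V) (S : Set V) (π : V → V) : SimpleGraph V :=
  fromEdgeSet ({e ∈ T.edgeSet | ∀ v ∈ S, v ∉ e} ∪ (fun v ↦ s(v, π v)) '' S)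

theorem reattach_adj_iff_of_notMem {a b : V} (ha : a ∉ S) (hb : b ∉ S) :
    (T.reattach S π).Adj a b ↔ T.Adj a b := by
  simp only [reattach, fromEdgeSet_adj, Set.mem_union, Set.mem_ofPred_eq, mem_edgeSet,
    Set.mem_image, Sym2.eq_iff, Sym2.mem_iff]
  constructor
  · rintro ⟨⟨h, -⟩ | ⟨v, hv, h⟩, -⟩
    · exact h
    · rcases h with ⟨rfl, -⟩ | ⟨rfl, -⟩ <;> contradiction
  · intro h
    exact ⟨Or.inl ⟨h, by rintro v hv (rfl | rfl) <;> contradiction⟩, h.ne⟩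

theorem reattach_adj_apply {v : V} (hv : v ∈ S) (hπv : π v ≠ v) :
    (T.reattach S π).Adj v (π v) :=
  (fromEdgeSet_adj _).2 ⟨Or.inr ⟨v, hv, rfl⟩, hπv.symm⟩

theorem reattach_le (hTG : T ≤ G) (hπ : ∀ v ∈ S, G.Adj v (π v)) : T.reattach S π ≤ G := by
  rw [reattach, ← fromEdgeSet_edgeSet G]
  refine fromEdgeSet_mono ?_
  rintro _ (⟨he, -⟩ | ⟨v, hv, rfl⟩)
  exacts [edgeSet_mono hTG he, hπ v hv]

section Ranked

variable (hr : ∀ v ∈ S, π v ∈ S → r (π v) < r v)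
include hr

theorem apply_ne_self_of_rank {v : V} (hv : v ∈ S) : π v ≠ v :=
  fun h ↦ (hr v hv (by rwa [h])).ne (congrArg r h)

theorem injOn_edge_of_rank : Set.InjOn (fun v ↦ s(v, π v)) S := by
  intro v hv w hw h
  rcases Sym2.eq_iff.1 h with ⟨h, -⟩ | ⟨hvw, hwv⟩
  · exact h
  · have h₁ : r w < r v := hwv ▸ hr v hv (hwv ▸ hw)
    have h₂ : r v < r w := hvw ▸ hr w hw (hvw ▸ hv)
    omega

theorem exists_notMem_reattach_reachable (v : V) :
    ∃ w ∉ S, (T.reattach S π).Reachable v w := by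
  by_cases hv : v ∈ S
  · have hvπv := (reattach_adj_apply (T := T) hv (apply_ne_self_of_rank hr hv)).reachable
    by_cases hπv : π v ∈ S
    · have := hr v hv hπv
      obtain ⟨w, hw, hπvw⟩ := exists_notMem_reattach_reachable (π v)
      exact ⟨w, hw, hvπv.trans hπvw⟩
    · exact ⟨π v, hπv, hvπv⟩
  · exact ⟨v, hv, .rfl⟩
termination_by r v

theorem Connected.reattach (hT : T.Connected)
    (hleaf : ∀ v ∈ S, (T.neighborSet v).Subsingleton) : (T.reattach S π).Connected := by
  have hout : ∀ a b, a ∉ S → b ∉ S → (T.reattach S π).Reachable a b := by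
    intro a b ha hb
    let f : T.induce Sᶜ →g T.reattach S π :=
      ⟨Subtype.val, fun {x y} h ↦ (reattach_adj_iff_of_notMem x.2 y.2).2 h⟩
    exact (hT.preconnected.induce_of_degree_eq_one (s := Sᶜ) (by simpa using hleaf)
      ⟨a, ha⟩ ⟨b, hb⟩).map f
  refine (connected_iff _).2 ⟨fun a b ↦ ?_, hT.nonempty⟩
  obtain ⟨a', ha', haa'⟩ := exists_notMem_reattach_reachable hr a
  obtain ⟨b', hb', hbb'⟩ := exists_notMem_reattach_reachable hr b
  exact haa'.trans ((hout a' b' ha' hb').trans hbb'.symm)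

theorem edgeSet_reattach : (T.reattach S π).edgeSet =
    {e ∈ T.edgeSet | ∀ v ∈ S, v ∉ e} ∪ (fun v ↦ s(v, π v)) '' S := by
  rw [reattach, edgeSet_fromEdgeSet, sdiff_eq_left]
  refine Set.disjoint_left.2 ?_
  rintro _ (⟨he, -⟩ | ⟨v, hv, rfl⟩)
  · exact T.not_isDiag_of_mem_edgeSet he
  · simpa using (apply_ne_self_of_rank hr hv).symm

theorem ncard_edgeSet_reattach [Finite V] (hp : ∀ v ∈ S, T.neighborSet v = {p v})
    (hpS : ∀ v ∈ S, p v ∉ S) : (T.reattach S π).edgeSet.ncard = T.edgeSet.ncard := by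
  have hadj : ∀ v ∈ S, ∀ w, T.Adj v w ↔ w = p v := fun v hv w ↦ Set.ext_iff.1 (hp v hv) w
  set P := (fun v ↦ s(v, p v)) '' S
  have hPT : P ⊆ T.edgeSet := by
    rintro _ ⟨v, hv, rfl⟩
    exact (hadj v hv _).2 rfl
  have hP : P.ncard = S.ncard := by
    refine Set.InjOn.ncard_image fun v hv w hw h ↦ ?_
    rcases Sym2.eq_iff.1 h with ⟨h, -⟩ | ⟨h, -⟩
    · exact h
    · exact absurd (h ▸ hv) (hpS w hw)
  have hE1 : {e ∈ T.edgeSet | ∀ v ∈ S, v ∉ e} = T.edgeSet \ P := by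
    ext e
    refine and_congr_right fun he ↦ ⟨?_, fun h v hv hve ↦ h ?_⟩
    · rintro h ⟨v, hv, rfl⟩
      exact h v hv (Sym2.mem_mk_left _ _)
    · obtain ⟨w, rfl⟩ := Sym2.mem_iff_exists.1 hve
      exact ⟨v, hv, by rw [(hadj v hv w).1 he]⟩
  have hdisj : Disjoint {e ∈ T.edgeSet | ∀ v ∈ S, v ∉ e} ((fun v ↦ s(v, π v)) '' S) := by
    refine Set.disjoint_left.2 ?_
    rintro _ ⟨-, h⟩ ⟨v, hv, rfl⟩
    exact h v hv (Sym2.mem_mk_left _ _)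
  rw [edgeSet_reattach hr, Set.ncard_union_eq hdisj, hE1, Set.ncard_sdiff hPT,
    (injOn_edge_of_rank hr).ncard_image, ← hP,
    Nat.sub_add_cancel (Set.ncard_le_ncard hPT)]

theorem IsTree.reattach [Finite V] (hT : T.IsTree) (hp : ∀ v ∈ S, T.neighborSet v = {p v})
    (hpS : ∀ v ∈ S, p v ∉ S) : (T.reattach S π).IsTree := by
  have hcard := (isTree_iff_connected_and_card.1 hT).2
  refine isTree_iff_connected_and_card.2
    ⟨hT.connected.reattach hr fun v hv ↦ (hp v hv) ▸ Set.subsingleton_singleton, ?_⟩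
  rwa [Nat.card_coe_set_eq, ncard_edgeSet_reattach hr hp hpS, ← Nat.card_coe_set_eq]

end Ranked

end Reattach

section Leaves

variable {T : SimpleGraph V}

theorem Preconnected.eq_or_eq_of_neighborSet_eq_singleton (hT : T.Preconnected) {u v : V}
    (hu : T.neighborSet u = {v}) (hv : T.neighborSet v = {u}) (w : V) : w = u ∨ w = v := by
  refine (hT u w).mem_subgraphVerts (H := (⊤ : T.Subgraph).induce {u, v}) ?_ (by simp)
  rintro x hx y hxy
  have hy : y ∈ T.neighborSet x := hxy
  rcases hx with rfl | rfl
  · rw [hu] at hy; simp_all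
  · rw [hv] at hy; simp_all

theorem Preconnected.isIndepSet_of_neighborSet_eq_singleton (hT : T.Preconnected) {L : Set V}
    {p : V → V} (hp : ∀ v ∈ L, T.neighborSet v = {p v}) (hL : ∀ v ∈ L, ∃ w, w ≠ v ∧ w ≠ p v) :
    T.IsIndepSet L := by
  intro u hu v hv _ huv
  have hadj : ∀ x ∈ L, ∀ y, T.Adj x y ↔ y = p x := fun x hx y ↦ Set.ext_iff.1 (hp x hx) y
  have hvu : v = p u := (hadj u hu v).1 huv
  have huv' : u = p v := (hadj v hv u).1 huv.symm
  obtain ⟨w, hwu, hwv⟩ := hL u hu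
  rcases hT.eq_or_eq_of_neighborSet_eq_singleton (by rw [hp u hu, ← hvu])
    (by rw [hp v hv, ← huv']) w with rfl | rfl
  exacts [hwu rfl, hwv hvu]

end Leaves

section Diversity

variable {T T₁ T₂ : SimpleGraph V} {S₁ S₂ : Set V}
  (hS : T.IsIndepSet (S₁ ∪ S₂)) (hdisj : Disjoint S₁ S₂)
  (h₁ : ∀ a b, a ∉ S₁ → b ∉ S₁ → (T₁.Adj a b ↔ T.Adj a b))
  (h₂ : ∀ a b, a ∉ S₂ → b ∉ S₂ → (T₂.Adj a b ↔ T.Adj a b))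
include hS hdisj h₁ h₂

theorem adj_of_adj_of_not_adj {a b : V} (hab : T.Adj a b) (hab₂ : ¬T₂.Adj a b) :
    T₁.Adj a b := by
  have hS₁ : ∀ x y, T.Adj x y → x ∈ S₂ → x ∉ S₁ ∧ y ∉ S₁ := fun x y hxy hx ↦
    ⟨hdisj.notMem_of_mem_right hx, fun hy ↦ hS (Or.inr hx) (Or.inl hy) hxy.ne hxy⟩
  by_cases ha : a ∈ S₂
  · obtain ⟨ha₁, hb₁⟩ := hS₁ a b hab ha
    exact (h₁ a b ha₁ hb₁).2 hab
  by_cases hb : b ∈ S₂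
  · obtain ⟨hb₁, ha₁⟩ := hS₁ b a hab.symm hb
    exact (h₁ a b ha₁ hb₁).2 hab
  exact absurd ((h₂ a b ha hb).2 hab) hab₂

theorem ncard_sdiff_add_ncard_inter_sym2_le [Finite V] :
    (T.edgeSet \ T₂.edgeSet).ncard + (T₁.edgeSet ∩ S₁.sym2).ncard ≤
      (T₁.edgeSet \ T₂.edgeSet).ncard := by
  have hR : T.edgeSet \ T₂.edgeSet ⊆ T₁.edgeSet \ T₂.edgeSet := by
    rintro ⟨a, b⟩ ⟨hab, hab₂⟩
    exact ⟨adj_of_adj_of_not_adj hS hdisj h₁ h₂ hab hab₂, hab₂⟩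
  have hI : T₁.edgeSet ∩ S₁.sym2 ⊆ T₁.edgeSet \ T₂.edgeSet := by
    rintro ⟨a, b⟩ ⟨hab, ha, hb⟩
    refine ⟨hab, fun hab₂ ↦ hS (Or.inl ha) (Or.inl hb) hab.ne ?_⟩
    exact (h₂ a b (hdisj.notMem_of_mem_left ha) (hdisj.notMem_of_mem_left hb)).1 hab₂
  have hRI : Disjoint (T.edgeSet \ T₂.edgeSet) (T₁.edgeSet ∩ S₁.sym2) := by
    refine Set.disjoint_left.2 ?_
    rintro ⟨a, b⟩ ⟨hab, -⟩ ⟨-, ha, hb⟩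
    exact hS (Or.inl ha) (Or.inl hb) hab.ne hab
  rw [← Set.ncard_union_eq hRI]
  exact Set.ncard_le_ncard (Set.union_subset hR hI)

end Diversity

theorem ncard_add_ncard_le_ncard_symmDiff [Finite V] {T T₁ T₂ : SimpleGraph V} {S₁ S₂ : Set V}
    (hS : T.IsIndepSet (S₁ ∪ S₂)) (hdisj : Disjoint S₁ S₂)
    (h₁ : ∀ a b, a ∉ S₁ → b ∉ S₁ → (T₁.Adj a b ↔ T.Adj a b))
    (h₂ : ∀ a b, a ∉ S₂ → b ∉ S₂ → (T₂.Adj a b ↔ T.Adj a b)) :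
    (T.edgeSet \ T₁.edgeSet).ncard + (T₁.edgeSet ∩ S₁.sym2).ncard +
      ((T.edgeSet \ T₂.edgeSet).ncard + (T₂.edgeSet ∩ S₂.sym2).ncard) ≤
      (symmDiff T₁.edgeSet T₂.edgeSet).ncard := by
  have h₁₂ := ncard_sdiff_add_ncard_inter_sym2_le hS hdisj h₁ h₂
  have h₂₁ := ncard_sdiff_add_ncard_inter_sym2_le (Set.union_comm S₁ S₂ ▸ hS) hdisj.symm h₂ h₁
  rw [Set.symmDiff_def, Set.ncard_union_eq disjoint_sdiff_sdiff]
  omega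

theorem IsTree.exists_isTree_le_rerouting_leaves [Finite V] {G T : SimpleGraph V}
    (hT : T.IsTree) (hTG : T ≤ G) {S : Set V} {p c : V → V}
    (hp : ∀ v ∈ S, T.neighborSet v = {p v}) (hS : T.IsIndepSet S)
    (hc : ∀ v ∈ S, G.Adj v (c v) ∧ c v ≠ p v) :
    ∃ T' ≤ G, T'.IsTree ∧ (∀ a b, a ∉ S → b ∉ S → (T'.Adj a b ↔ T.Adj a b)) ∧
      S.ncard ≤ (T.edgeSet \ T'.edgeSet).ncard + (T'.edgeSet ∩ S.sym2).ncard := by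
  classical
  have hpadj : ∀ v ∈ S, T.Adj v (p v) := fun v hv ↦ (Set.ext_iff.1 (hp v hv) (p v)).2 rfl
  have hpS : ∀ v ∈ S, p v ∉ S := fun v hv hpv ↦ hS hv hpv (hpadj v hv).ne (hpadj v hv)
  obtain ⟨B, hBS, ⟨r, hr⟩, hBc⟩ :=
    S.toFinite.exists_feedback_subset_image_sdiff c fun v hv ↦ (hc v hv).1.ne'
  -- `π` follows `c` except on `B`, where the tree edge is kept; this breaks every cycle of `c`
  set π := B.piecewise p c
  have hπr : ∀ v ∈ S, π v ∈ S → r (π v) < r v := by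
    intro v hv hπv
    by_cases hvB : v ∈ B
    · simp only [π, B.piecewise_eq_of_mem _ _ hvB] at hπv
      exact absurd hπv (hpS v hv)
    · simp only [π, B.piecewise_eq_of_notMem _ _ hvB] at hπv ⊢
      exact hr v ⟨hv, hvB⟩ hπv
  have hπ : ∀ v ∈ S, G.Adj v (π v) := by
    intro v hv
    by_cases hvB : v ∈ B
    · simpa [π, hvB] using hTG (hpadj v hv)
    · simpa [π, hvB] using (hc v hv).1
  set T' := T.reattach S π
  refine ⟨T', reattach_le hTG hπ, hT.reattach hπr hp hpS, fun a b ↦ reattach_adj_iff_of_notMem,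
    ?_⟩
  have hremoved : (S \ B).ncard ≤ (T.edgeSet \ T'.edgeSet).ncard := by
    refine Set.ncard_le_ncard_of_injOn (fun v ↦ s(v, p v)) (fun v hv ↦ ⟨hpadj v hv.1, ?_⟩) ?_
    · rw [edgeSet_reattach hπr]
      rintro (⟨-, h⟩ | ⟨w, hw, h⟩)
      · exact h v hv.1 (Sym2.mem_mk_left _ _)
      · rcases Sym2.eq_iff.1 h with ⟨rfl, h⟩ | ⟨rfl, -⟩
        · exact (hc w hv.1).2 (by simpa [π, hv.2] using h)
        · exact hpS v hv.1 hw
    · intro v hv w hw h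
      rcases Sym2.eq_iff.1 h with ⟨h, -⟩ | ⟨h, -⟩
      · exact h
      · exact absurd (h ▸ hv.1) (hpS w hw.1)
  have hinside : B.ncard ≤ (T'.edgeSet ∩ S.sym2).ncard := by
    choose! u hu huc using fun b (hb : b ∈ B) ↦ hBc hb
    have hπu : ∀ b ∈ B, π (u b) = b := fun b hb ↦ by simp [π, (hu b hb).2, huc b hb]
    refine Set.ncard_le_ncard_of_injOn (fun b ↦ s(u b, b))
      (fun b hb ↦ ⟨?_, (hu b hb).1, hBS hb⟩) ?_
    · have := reattach_adj_apply (T := T) (hu b hb).1 (apply_ne_self_of_rank hπr (hu b hb).1)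
      rwa [hπu b hb] at this
    · intro b hb b' hb' h
      rcases Sym2.eq_iff.1 h with ⟨-, h⟩ | ⟨h, -⟩
      · exact h
      · exact absurd (h ▸ hb') (hu b hb).2
  calc S.ncard = (S \ B).ncard + B.ncard := (Set.ncard_sdiff_add_ncard_of_subset hBS).symm
    _ ≤ _ := add_le_add hremoved hinside

end SimpleGraph

theorem stmt9_general {V : Type*} [Fintype V] (G T : SimpleGraph V)
    (k ℓ : ℕ)
    (hsub : T ≤ G) (hT : T.IsTree)
    (L : Finset V)
    (hleaf : ∀ v ∈ L, (T.neighborSet v).ncard = 1)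
    (hdeg : ∀ v ∈ L, 2 ≤ (G.neighborSet v).ncard)
    (hL : 2 * ((k + 3) / 4) * ℓ ≤ L.card) :
    ∃ Ts : Fin ℓ → SimpleGraph V, (∀ i, Ts i ≤ G ∧ (Ts i).IsTree) ∧
      ∀ i j, i ≠ j → k ≤ (symmDiff (Ts i).edgeSet (Ts j).edgeSet).ncard := by
  choose! p hp using fun v hv ↦ Set.ncard_eq_one.1 (hleaf v hv)
  choose! c hc using fun v hv ↦ Set.exists_ne_of_one_lt_ncard (hdeg v hv) (p v)
  have hind : T.IsIndepSet L := hT.connected.preconnected.isIndepSet_of_neighborSet_eq_singleton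
    hp fun v hv ↦ ⟨c v, (hc v hv).1.ne', (hc v hv).2⟩
  obtain ⟨S, hS, hdisj⟩ := L.exists_pairwise_disjoint_card_eq hL
  choose Ts hTsG hTs hagree hcard using fun i ↦
    hT.exists_isTree_le_rerouting_leaves hsub (S := S i)
      (fun v hv ↦ hp v ((hS i).1 hv)) (hind.mono (hS i).1) (fun v hv ↦ hc v ((hS i).1 hv))
  refine ⟨Ts, fun i ↦ ⟨hTsG i, hTs i⟩, fun i j hij ↦ ?_⟩
  have hdiv := SimpleGraph.ncard_add_ncard_le_ncard_symmDiff
    (hind.mono (Set.union_subset (hS i).1 (hS j).1)) (Finset.disjoint_coe.2 (hdisj hij))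
    (hagree i) (hagree j)
  calc k ≤ (S i).card + (S j).card := by rw [(hS i).2, (hS j).2]; omega
    _ ≤ _ := by
      simpa only [Set.ncard_coe_finset] using (add_le_add (hcard i) (hcard j)).trans hdiv

/-- If a spanning tree T of a connected graph G has a set L of at least 2⌈k/4⌉ℓ leaves,
each of degree at least 2 in G, then G has ℓ pairwise k-diverse spanning trees. -/
theorem stmt9 {V : Type*} [Fintype V] (G T : SimpleGraph V)
    (k ℓ : ℕ) (hk : 1 ≤ k) (hℓ : 1 ≤ ℓ)
    (hG : G.Connected) (hsub : T ≤ G) (hT : T.IsTree)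
    (L : Finset V)
    (hleaf : ∀ v ∈ L, (T.neighborSet v).ncard = 1)
    (hdeg : ∀ v ∈ L, 2 ≤ (G.neighborSet v).ncard)
    (hL : 2 * ((k + 3) / 4) * ℓ ≤ L.card) :
    ∃ Ts : Fin ℓ → SimpleGraph V, (∀ i, Ts i ≤ G ∧ (Ts i).IsTree) ∧
      ∀ i j, i ≠ j → k ≤ (symmDiff (Ts i).edgeSet (Ts j).edgeSet).ncard :=
  stmt9_general G T k ℓ hsub hT L hleaf hdeg hL
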